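/- Let θ ≥ 2 be an integer and φ : Δ_θ → ℝ continuous, and define g(x) = max_{z ∈ Δ_θ(x)} φ(z). For each n ≥ 1 suppose given real numbers φ_n^{(λ)}(μ) for each pair λ, μ ⊢_θ n, together with a sequence δ_n → 0 such that |φ_n^{(λ)}(μ) − φ(μ/n)| ≤ δ_n for all n and all λ, μ ⊢_θ n. Then for every y ∈ ℝ^θ, as n → ∞, (1/n)·log( ∑_{λ ⊢_θ n} e^{y·λ} ∑_{μ ⊢_θ n, μ ⊵ λ} exp(n·φ_n^{(λ)}(μ)) ) → max_{x ∈ Δ_θ} ( y·x + g(x) ), where y·λ = ∑_{i=1}^θ y_i λ_i. -/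
import Mathlib


open Filter Topology

/-- The set `Δ_θ` of decreasing probability vectors in `ℝ^θ`. -/
def simplexOrd (θ : ℕ) : Set (Fin θ → ℝ) :=
  {x | (∀ i j : Fin θ, i ≤ j → x j ≤ x i) ∧ (∀ i, 0 ≤ x i) ∧ ∑ i, x i = 1}

/-- `y ⊵ x`: domination of partial sums (real vectors). -/
def domR (θ : ℕ) (y x : Fin θ → ℝ) : Prop :=
  ∀ j : Fin θ, (∑ i ∈ Finset.univ.filter (fun i : Fin θ => i ≤ j), x i)
    ≤ ∑ i ∈ Finset.univ.filter (fun i : Fin θ => i ≤ j), y i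

/-- `Δ_θ(x) = {y ∈ Δ_θ : y ⊵ x}`. -/
def domSet (θ : ℕ) (x : Fin θ → ℝ) : Set (Fin θ → ℝ) :=
  {y ∈ simplexOrd θ | domR θ y x}

/-- The finset of partitions of `n` into at most `θ` parts. -/
def partitionsTh (θ n : ℕ) : Finset (Fin θ → ℕ) :=
  (Fintype.piFinset fun _ : Fin θ => Finset.range (n + 1)).filter
    (fun lam => (∀ i j : Fin θ, i ≤ j → lam j ≤ lam i) ∧ ∑ i, lam i = n)

/-- `μ ⊵ λ`: domination of partial sums (partitions). -/
def domN (θ : ℕ) (μ lam : Fin θ → ℕ) : Prop :=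
  ∀ j : Fin θ, (∑ i ∈ Finset.univ.filter (fun i : Fin θ => i ≤ j), lam i)
    ≤ ∑ i ∈ Finset.univ.filter (fun i : Fin θ => i ≤ j), μ i

instance (θ : ℕ) (μ lam : Fin θ → ℕ) : Decidable (domN θ μ lam) := by
  unfold domN; infer_instance

/-! ### Auxiliary material -/

section Aux

open Finset

variable {θ : ℕ}

/-- Extend a function on `Fin θ` to `ℕ` by zero. -/
def ext0 {M : Type*} [Zero M] (θ : ℕ) (f : Fin θ → M) : ℕ → M :=
  fun k => if h : k < θ then f ⟨k, h⟩ else 0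

lemma filt_sum {M : Type*} [AddCommMonoid M] (f : Fin θ → M) (j : Fin θ) :
    ∑ i ∈ Finset.univ.filter (fun i : Fin θ => i ≤ j), f i
      = ∑ k ∈ Finset.range (j.val + 1), ext0 θ f k := by
  refine Finset.sum_nbij' (fun i => i.val) (fun k => if h : k < θ then ⟨k, h⟩ else j) ?_ ?_ ?_ ?_ ?_
  · intro i hi
    simp only [mem_filter, mem_univ, true_and, Fin.le_def] at hi
    simpa [mem_range, Nat.lt_succ_iff] using hi
  · intro k hk
    simp only [mem_range, Nat.lt_succ_iff] at hk
    have hkθ : k < θ := lt_of_le_of_lt hk j.isLt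
    simp only [hkθ, dif_pos, mem_filter, mem_univ, true_and, Fin.le_def]
    exact hk
  · intro i hi
    simp [i.isLt]
  · intro k hk
    simp only [mem_range, Nat.lt_succ_iff] at hk
    have hkθ : k < θ := lt_of_le_of_lt hk j.isLt
    simp [hkθ]
  · intro i hi
    simp [ext0, i.isLt]

/-- Cumulative sums of the zero-extension. -/
noncomputable def cum (θ : ℕ) (v : Fin θ → ℝ) : ℕ → ℝ :=
  fun k => ∑ i ∈ Finset.range k, ext0 θ v i

lemma cum_zero (v : Fin θ → ℝ) : cum θ v 0 = 0 := by simp [cum]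

lemma cum_top (v : Fin θ → ℝ) (hv : ∑ i, v i = 1) : cum θ v θ = 1 := by
  have := Fin.sum_univ_eq_sum_range (ext0 θ v) θ
  have h2 : ∀ i : Fin θ, ext0 θ v i.val = v i := by intro i; simp [ext0, i.isLt]
  simp only [h2] at this
  rw [cum, ← this, hv]

lemma cum_succ (v : Fin θ → ℝ) (k : ℕ) : cum θ v (k + 1) = cum θ v k + ext0 θ v k := by
  simp [cum, Finset.sum_range_succ]

lemma ext0_nonneg (v : Fin θ → ℝ) (hv : ∀ i, 0 ≤ v i) (k : ℕ) : 0 ≤ ext0 θ v k := by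
  unfold ext0; split <;> simp [hv]

lemma cum_mono (v : Fin θ → ℝ) (hv : ∀ i, 0 ≤ v i) : Monotone (cum θ v) := by
  apply monotone_nat_of_le_succ
  intro k; rw [cum_succ]; linarith [ext0_nonneg v hv k]

lemma cum_nonneg (v : Fin θ → ℝ) (hv : ∀ i, 0 ≤ v i) (k : ℕ) : 0 ≤ cum θ v k := by
  have := cum_mono v hv (Nat.zero_le k); rwa [cum_zero] at this

lemma filt_sum_cum (v : Fin θ → ℝ) (j : Fin θ) :
    ∑ i ∈ Finset.univ.filter (fun i : Fin θ => i ≤ j), v i = cum θ v (j.val + 1) :=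
  filt_sum v j

/-- The rounding construction of a partition approximating `n • v`. -/
lemma construct (θ : ℕ) (v : Fin θ → ℝ) (hv : v ∈ simplexOrd θ)
    (c : ℝ) (hgap : ∀ k : ℕ, k + 1 < θ → ext0 θ v (k + 1) + c ≤ ext0 θ v k)
    (R : ℝ → ℕ) (hRmono : Monotone R)
    (hRlo : ∀ a : ℝ, a - 1 ≤ (R a : ℝ)) (hRhi : ∀ a : ℝ, 0 ≤ a → (R a : ℝ) ≤ a + 1)
    (hR0 : R 0 = 0) (hRid : ∀ m : ℕ, R m = m)
    (n : ℕ) (hnc : 4 ≤ (n : ℝ) * c) :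
    ∃ lam : Fin θ → ℕ, lam ∈ partitionsTh θ n ∧
      (∀ j : Fin θ, (∑ i ∈ Finset.univ.filter (fun i : Fin θ => i ≤ j), lam i)
          = R ((n : ℝ) * cum θ v (j.val + 1))) ∧
      (∀ i : Fin θ, |(lam i : ℝ) - (n : ℝ) * v i| ≤ 2) := by
  obtain ⟨hmono, hnn, hsum⟩ := hv
  have hθpos : 0 < θ := by
    by_contra h
    push_neg at h
    interval_cases θ
    simp at hsum
  set X : ℕ → ℝ := cum θ v with hX
  set L : ℕ → ℕ := fun k => R ((n : ℝ) * X k) with hL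
  have hXmono := cum_mono v hnn
  have hXnn := cum_nonneg v hnn
  have hLmono : Monotone L := by
    intro a b hab
    exact hRmono (by nlinarith [hXmono hab, hXnn a] : (n:ℝ) * X a ≤ (n:ℝ) * X b)
  have hL0 : L 0 = 0 := by
    show R ((n : ℝ) * X 0) = 0
    rw [hX, cum_zero, mul_zero, hR0]
  have hLθ : L θ = n := by
    show R ((n : ℝ) * X θ) = n
    rw [hX, cum_top v hsum, mul_one]
    exact hRid n
  have hLlo : ∀ k, (n : ℝ) * X k - 1 ≤ (L k : ℝ) := fun k => hRlo _
  have hLhi : ∀ k, (L k : ℝ) ≤ (n : ℝ) * X k + 1 := fun k =>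
    hRhi _ (mul_nonneg (Nat.cast_nonneg n) (hXnn k))
  set lamN : ℕ → ℕ := fun k => L (k + 1) - L k with hlamN
  have hpart : ∀ m, ∑ k ∈ Finset.range m, lamN k = L m := by
    intro m
    have := Finset.sum_range_tsub (f := L) hLmono m
    rw [hlamN, this, hL0, Nat.sub_zero]
  set lam : Fin θ → ℕ := fun i => lamN i.val with hlam
  have hlamsum : ∑ i, lam i = n := by
    have := Fin.sum_univ_eq_sum_range lamN θ
    rw [hlam]
    simp only [this, hpart, hLθ]
  have hadj : ∀ k : ℕ, k + 1 < θ → lamN (k + 1) ≤ lamN k := by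
    intro k hk
    have key : (L (k+1+1) : ℝ) + (L k : ℝ) ≤ 2 * (L (k+1) : ℝ) := by
      have h1 := hLhi (k+1+1)
      have h2 := hLhi k
      have h3 := hLlo (k+1)
      have hg := hgap k hk
      have e1 : X (k+1+1) = X (k+1) + ext0 θ v (k+1) := cum_succ v (k+1)
      have e2 : X (k+1) = X k + ext0 θ v k := cum_succ v k
      nlinarith
    have key' : L (k+1+1) + L k ≤ 2 * L (k+1) := by exact_mod_cast key
    have m1 : L k ≤ L (k+1) := hLmono (Nat.le_succ k)
    have m2 : L (k+1) ≤ L (k+1+1) := hLmono (Nat.le_succ _)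
    show L (k+1+1) - L (k+1) ≤ L (k+1) - L k
    omega
  have hanti : ∀ a b : ℕ, a ≤ b → b < θ → lamN b ≤ lamN a := by
    intro a b hab hbθ
    induction b with
    | zero =>
      have : a = 0 := by omega
      rw [this]
    | succ m ih =>
      rcases Nat.lt_or_ge a (m+1) with h | h
      · exact le_trans (hadj m hbθ) (ih (by omega) (by omega))
      · have : a = m + 1 := by omega
        rw [this]
  have hclose : ∀ i : Fin θ, |(lam i : ℝ) - (n : ℝ) * v i| ≤ 2 := by
    intro i
    have hcast : (lam i : ℝ) = (L (i.val + 1) : ℝ) - (L i.val : ℝ) := by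
      rw [hlam]
      simp only [hlamN]
      rw [Nat.cast_sub (hLmono (Nat.le_succ _))]
    have h1 := hLhi (i.val + 1)
    have h2 := hLlo (i.val + 1)
    have h3 := hLhi i.val
    have h4 := hLlo i.val
    have e1 : X (i.val + 1) = X i.val + ext0 θ v i.val := cum_succ v i.val
    have e2 : ext0 θ v i.val = v i := by simp [ext0, i.isLt]
    rw [hcast, abs_le]
    constructor <;> nlinarith
  refine ⟨lam, ?_, ?_, hclose⟩
  · rw [partitionsTh, Finset.mem_filter]
    refine ⟨?_, ?_, hlamsum⟩
    · rw [Fintype.mem_piFinset]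
      intro i
      rw [Finset.mem_range, Nat.lt_succ_iff]
      calc lam i ≤ L (i.val + 1) := Nat.sub_le _ _
        _ ≤ L θ := hLmono i.isLt
        _ = n := hLθ
    · intro i j hij
      exact hanti i.val j.val hij j.isLt
  · intro j
    rw [filt_sum]
    have : ∀ k ∈ Finset.range (j.val + 1), ext0 θ lam k = lamN k := by
      intro k hk
      rw [Finset.mem_range, Nat.lt_succ_iff] at hk
      have : k < θ := lt_of_le_of_lt hk j.isLt
      simp [ext0, this, hlam]
    rw [Finset.sum_congr rfl this, hpart]

lemma isClosed_simplexOrd (θ : ℕ) : IsClosed (simplexOrd θ) := by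
  have h1 : IsClosed {x : Fin θ → ℝ | ∀ i j : Fin θ, i ≤ j → x j ≤ x i} := by
    have : {x : Fin θ → ℝ | ∀ i j : Fin θ, i ≤ j → x j ≤ x i}
        = ⋂ (i : Fin θ), ⋂ (j : Fin θ), ⋂ (_ : i ≤ j), {x | x j ≤ x i} := by
      ext x; simp
    rw [this]
    exact isClosed_iInter fun i => isClosed_iInter fun j => isClosed_iInter fun _ =>
      isClosed_le (continuous_apply j) (continuous_apply i)
  have h2 : IsClosed {x : Fin θ → ℝ | ∀ i, 0 ≤ x i} := by
    have : {x : Fin θ → ℝ | ∀ i, 0 ≤ x i} = ⋂ (i : Fin θ), {x | 0 ≤ x i} := by ext x; simp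
    rw [this]
    exact isClosed_iInter fun i => isClosed_le continuous_const (continuous_apply i)
  have h3 : IsClosed {x : Fin θ → ℝ | ∑ i, x i = 1} :=
    isClosed_eq (continuous_finset_sum _ fun i _ => continuous_apply i) continuous_const
  exact (h1.inter (h2.inter h3))

lemma isCompact_simplexOrd (θ : ℕ) : IsCompact (simplexOrd θ) := by
  refine IsCompact.of_isClosed_subset (isCompact_Icc (a := (0 : Fin θ → ℝ)) (b := 1))
    (isClosed_simplexOrd θ) ?_
  rintro x ⟨hmono, hnn, hsum⟩
  constructor
  · intro i; exact hnn i
  · intro i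
    calc x i ≤ ∑ j, x j := Finset.single_le_sum (fun j _ => hnn j) (mem_univ i)
      _ = 1 := hsum

def pairSet (θ : ℕ) : Set ((Fin θ → ℝ) × (Fin θ → ℝ)) :=
  {p | p.1 ∈ simplexOrd θ ∧ p.2 ∈ simplexOrd θ ∧ domR θ p.2 p.1}

lemma isCompact_pairSet (θ : ℕ) : IsCompact (pairSet θ) := by
  have hcs : IsCompact ((simplexOrd θ) ×ˢ (simplexOrd θ)) :=
    (isCompact_simplexOrd θ).prod (isCompact_simplexOrd θ)
  have hcl : IsClosed {p : (Fin θ → ℝ) × (Fin θ → ℝ) | domR θ p.2 p.1} := by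
    have : {p : (Fin θ → ℝ) × (Fin θ → ℝ) | domR θ p.2 p.1}
        = ⋂ (j : Fin θ), {p | (∑ i ∈ Finset.univ.filter (fun i : Fin θ => i ≤ j), p.1 i)
            ≤ ∑ i ∈ Finset.univ.filter (fun i : Fin θ => i ≤ j), p.2 i} := by
      ext p; simp [domR]
    rw [this]
    refine isClosed_iInter fun j => isClosed_le ?_ ?_
    · exact continuous_finset_sum _ fun i _ => (continuous_apply i).comp continuous_fst
    · exact continuous_finset_sum _ fun i _ => (continuous_apply i).comp continuous_snd
  have : pairSet θ = ((simplexOrd θ) ×ˢ (simplexOrd θ)) ∩ {p | domR θ p.2 p.1} := by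
    ext p; simp [pairSet, Set.mem_prod, and_assoc]
  rw [this]
  exact hcs.inter_right hcl

lemma e1_mem (θ : ℕ) (hθ : 0 < θ) :
    (fun i : Fin θ => if i = (⟨0, hθ⟩ : Fin θ) then (1:ℝ) else 0) ∈ simplexOrd θ := by
  refine ⟨?_, ?_, ?_⟩
  · intro i j hij
    simp only
    by_cases hj : j = (⟨0, hθ⟩ : Fin θ)
    · have : i = (⟨0, hθ⟩ : Fin θ) := by
        apply Fin.ext
        have := Fin.le_def.mp hij
        have hj0 : j.val = 0 := by rw [hj]
        omega
      simp [this, hj]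
    · rw [if_neg hj]
      split <;> norm_num
  · intro i; simp only; split <;> norm_num
  · rw [Finset.sum_ite_eq' univ (⟨0, hθ⟩ : Fin θ) (fun _ => (1:ℝ))]
    simp

lemma pairSet_nonempty (θ : ℕ) (hθ : 0 < θ) : (pairSet θ).Nonempty := by
  set e := fun i : Fin θ => if i = (⟨0, hθ⟩ : Fin θ) then (1:ℝ) else 0
  exact ⟨(e, e), e1_mem θ hθ, e1_mem θ hθ, fun j => le_refl _⟩

/-- The strictly decreasing probability vector used for perturbation. -/
noncomputable def uvec (θ : ℕ) : Fin θ → ℝ :=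
  fun i => ((θ : ℝ) - i.val) * (2 / (θ * (θ + 1)))

lemma uvec_mem (θ : ℕ) (hθ : 0 < θ) : uvec θ ∈ simplexOrd θ := by
  have hθR : (1 : ℝ) ≤ (θ : ℝ) := by exact_mod_cast hθ
  have hc : (0:ℝ) < 2 / (θ * (θ + 1)) := by positivity
  refine ⟨?_, ?_, ?_⟩
  · intro i j hij
    have : (j.val : ℝ) ≥ (i.val : ℝ) := by exact_mod_cast (Fin.le_def.mp hij)
    unfold uvec
    have : (θ : ℝ) - j.val ≤ (θ : ℝ) - i.val := by linarith
    nlinarith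
  · intro i
    have : (i.val : ℝ) < (θ : ℝ) := by exact_mod_cast i.isLt
    unfold uvec
    nlinarith
  · unfold uvec
    rw [← Finset.sum_mul]
    have h1 : ∑ i : Fin θ, ((θ:ℝ) - i.val) = (θ:ℝ)*θ - ∑ i : Fin θ, (i.val : ℝ) := by
      rw [Finset.sum_sub_distrib, Finset.sum_const, Finset.card_univ, Fintype.card_fin]
      ring_nf
    have h2 : (∑ i : Fin θ, (i.val : ℝ)) * 2 = (θ:ℝ) * ((θ:ℝ) - 1) := by
      have hg := Finset.sum_range_id_mul_two θ
      have hc2 : ∑ i : Fin θ, (i.val : ℝ) = ((∑ i ∈ Finset.range θ, i : ℕ) : ℝ) := by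
        rw [Nat.cast_sum]
        exact Fin.sum_univ_eq_sum_range (fun k => (k:ℝ)) θ
      rw [hc2]
      have : (((∑ i ∈ Finset.range θ, i) * 2 : ℕ) : ℝ) = ((θ * (θ-1) : ℕ) : ℝ) := by
        exact_mod_cast congrArg (Nat.cast (R := ℝ)) hg
      push_cast [Nat.cast_sub hθ] at this ⊢
      linarith
    have hθ0 : (θ:ℝ) ≠ 0 := by linarith
    have hθ1 : (θ:ℝ) + 1 ≠ 0 := by linarith
    rw [h1]
    field_simp
    nlinarith [h2]

lemma uvec_gap (θ : ℕ) : ∀ k : ℕ, k + 1 < θ →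
    ext0 θ (uvec θ) (k + 1) + 2 / (θ * (θ + 1)) ≤ ext0 θ (uvec θ) k := by
  intro k hk
  have hkθ : k < θ := by omega
  rw [ext0, ext0, dif_pos hk, dif_pos hkθ]
  unfold uvec
  simp only
  apply le_of_eq
  push_cast
  ring

lemma combo_mem (θ : ℕ) (v w : Fin θ → ℝ) (hv : v ∈ simplexOrd θ) (hw : w ∈ simplexOrd θ)
    (t : ℝ) (h0 : 0 ≤ t) (h1 : t ≤ 1) :
    (fun i => (1 - t) * v i + t * w i) ∈ simplexOrd θ := by
  obtain ⟨hv1, hv2, hv3⟩ := hv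
  obtain ⟨hw1, hw2, hw3⟩ := hw
  refine ⟨?_, ?_, ?_⟩
  · intro i j hij
    simp only
    have := hv1 i j hij
    have := hw1 i j hij
    nlinarith
  · intro i
    simp only
    have := hv2 i
    have := hw2 i
    nlinarith
  · simp only
    rw [Finset.sum_add_distrib, ← Finset.mul_sum, ← Finset.mul_sum, hv3, hw3]
    ring

lemma ext0_combo (θ : ℕ) (v w : Fin θ → ℝ) (a b : ℝ) (k : ℕ) :
    ext0 θ (fun i => a * v i + b * w i) k = a * ext0 θ v k + b * ext0 θ w k := by
  unfold ext0
  split <;> simp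

lemma cum_combo (θ : ℕ) (v w : Fin θ → ℝ) (a b : ℝ) (m : ℕ) :
    cum θ (fun i => a * v i + b * w i) m = a * cum θ v m + b * cum θ w m := by
  unfold cum
  rw [Finset.mul_sum, Finset.mul_sum, ← Finset.sum_add_distrib]
  exact Finset.sum_congr rfl fun k _ => ext0_combo θ v w a b k

lemma combo_gap (θ : ℕ) (v w : Fin θ → ℝ) (hv : ∀ i j : Fin θ, i ≤ j → v j ≤ v i)
    (c : ℝ) (hw : ∀ k : ℕ, k + 1 < θ → ext0 θ w (k + 1) + c ≤ ext0 θ w k)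
    (t : ℝ) (h0 : 0 ≤ t) (h1 : t ≤ 1) :
    ∀ k : ℕ, k + 1 < θ →
      ext0 θ (fun i => (1 - t) * v i + t * w i) (k + 1) + t * c
        ≤ ext0 θ (fun i => (1 - t) * v i + t * w i) k := by
  intro k hk
  have hkθ : k < θ := by omega
  rw [ext0_combo, ext0_combo]
  have hvk : ext0 θ v (k + 1) ≤ ext0 θ v k := by
    rw [ext0, ext0, dif_pos hk, dif_pos hkθ]
    exact hv ⟨k, hkθ⟩ ⟨k + 1, hk⟩ (by simp [Fin.le_def])
  have hwk := hw k hk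
  nlinarith

lemma part_mem_simplex (θ n : ℕ) (hn : 1 ≤ n) (lam : Fin θ → ℕ)
    (h : lam ∈ partitionsTh θ n) :
    (fun i => (lam i : ℝ) / n) ∈ simplexOrd θ := by
  rw [partitionsTh, Finset.mem_filter] at h
  obtain ⟨-, hmono, hsum⟩ := h
  have hn0 : (0:ℝ) < n := by exact_mod_cast hn
  refine ⟨?_, ?_, ?_⟩
  · intro i j hij
    simp only
    have : (lam j : ℝ) ≤ (lam i : ℝ) := by exact_mod_cast hmono i j hij
    exact div_le_div_of_nonneg_right this hn0.le |>.trans_eq rfl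
  · intro i
    positivity
  · simp only
    rw [← Finset.sum_div]
    rw [show ∑ i, (lam i : ℝ) = ((∑ i, lam i : ℕ) : ℝ) by push_cast; rfl, hsum]
    field_simp

lemma domN_domR (θ n : ℕ) (hn : 1 ≤ n) (mu lam : Fin θ → ℕ) (h : domN θ mu lam) :
    domR θ (fun i => (mu i : ℝ) / n) (fun i => (lam i : ℝ) / n) := by
  intro j
  have hn0 : (0:ℝ) < n := by exact_mod_cast hn
  have hj := h j
  rw [← Finset.sum_div, ← Finset.sum_div]
  apply div_le_div_of_nonneg_right _ hn0.le |>.trans_eq rfl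
  exact_mod_cast hj

lemma domN_refl (θ : ℕ) (lam : Fin θ → ℕ) : domN θ lam lam := fun _ => le_refl _

lemma epart_mem (θ n : ℕ) (hθ : 0 < θ) :
    (fun i : Fin θ => if i = (⟨0, hθ⟩ : Fin θ) then n else 0) ∈ partitionsTh θ n := by
  rw [partitionsTh, Finset.mem_filter]
  refine ⟨?_, ?_, ?_⟩
  · rw [Fintype.mem_piFinset]
    intro i
    rw [Finset.mem_range, Nat.lt_succ_iff]
    show (if i = (⟨0, hθ⟩ : Fin θ) then n else 0) ≤ n
    split <;> omega
  · intro i j hij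
    simp only
    by_cases hj : j = (⟨0, hθ⟩ : Fin θ)
    · have : i = (⟨0, hθ⟩ : Fin θ) := by
        apply Fin.ext
        have := Fin.le_def.mp hij
        have hj0 : j.val = 0 := by rw [hj]
        omega
      simp [this, hj]
    · rw [if_neg hj]
      split <;> omega
  · rw [Finset.sum_ite_eq' Finset.univ (⟨0, hθ⟩ : Fin θ) (fun _ => n)]
    simp

lemma partitionsTh_nonempty (θ n : ℕ) (hθ : 0 < θ) : (partitionsTh θ n).Nonempty :=
  ⟨_, epart_mem θ n hθ⟩

lemma card_partitionsTh_le (θ n : ℕ) : (partitionsTh θ n).card ≤ (n + 1) ^ θ := by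
  calc (partitionsTh θ n).card
      ≤ (Fintype.piFinset fun _ : Fin θ => Finset.range (n + 1)).card :=
        Finset.card_filter_le _ _
    _ = (n + 1) ^ θ := by
        rw [Fintype.card_piFinset]
        simp

lemma coord_close (n : ℕ) (hn : (0:ℝ) < n) (a b : ℝ) (h : |a - (n:ℝ) * b| ≤ 2) :
    |a / (n:ℝ) - b| ≤ 2 / n := by
  rw [show a / (n:ℝ) - b = (a - (n:ℝ) * b) / n by field_simp]
  rw [abs_div, abs_of_pos hn]
  exact div_le_div_of_nonneg_right h hn.le

lemma log_div_tendsto : Tendsto (fun n : ℕ => Real.log ((n:ℝ) + 1) / (n:ℝ)) atTop (𝓝 0) := by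
  have h1 := Real.tendsto_pow_log_div_mul_add_atTop 1 (-1) 1 one_ne_zero
  have h2 : Tendsto (fun n : ℕ => (n:ℝ) + 1) atTop atTop :=
    tendsto_atTop_add_const_right _ 1 tendsto_natCast_atTop_atTop
  have h3 := h1.comp h2
  refine h3.congr fun n => ?_
  simp only [Function.comp_apply, pow_one]
  norm_num

/-- The full partition-sum appearing in the statement. -/
noncomputable def Sfun (θ : ℕ) (Φ : (n : ℕ) → (Fin θ → ℕ) → (Fin θ → ℕ) → ℝ)
    (y : Fin θ → ℝ) (n : ℕ) : ℝ :=
  ∑ lam ∈ partitionsTh θ n, Real.exp (∑ i, y i * (lam i : ℝ)) *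
    ∑ μ ∈ (partitionsTh θ n).filter (fun μ => domN θ μ lam),
      Real.exp ((n : ℝ) * Φ n lam μ)

lemma Sfun_pos (θ : ℕ) (hθ : 0 < θ) (Φ : (n : ℕ) → (Fin θ → ℕ) → (Fin θ → ℕ) → ℝ)
    (y : Fin θ → ℝ) (n : ℕ) : 0 < Sfun θ Φ y n := by
  apply Finset.sum_pos _ (partitionsTh_nonempty θ n hθ)
  intro lam hlam
  apply mul_pos (Real.exp_pos _)
  apply Finset.sum_pos (fun mu _ => Real.exp_pos _)
  exact ⟨lam, Finset.mem_filter.mpr ⟨hlam, domN_refl θ lam⟩⟩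

end Aux

set_option maxHeartbeats 1000000 in
theorem stmt7 (θ : ℕ) (hθ : 2 ≤ θ)
    (φ : (Fin θ → ℝ) → ℝ) (hφ : ContinuousOn φ (simplexOrd θ))
    (g : (Fin θ → ℝ) → ℝ)
    (hg : ∀ x ∈ simplexOrd θ, IsGreatest (φ '' domSet θ x) (g x))
    (Φ : (n : ℕ) → (Fin θ → ℕ) → (Fin θ → ℕ) → ℝ)
    (δ : ℕ → ℝ) (hδ : Tendsto δ atTop (nhds 0))
    (happrox : ∀ n : ℕ, 1 ≤ n → ∀ lam ∈ partitionsTh θ n, ∀ μ ∈ partitionsTh θ n,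
      |Φ n lam μ - φ (fun i => (μ i : ℝ) / n)| ≤ δ n)
    (y : Fin θ → ℝ) :
    ∃ M : ℝ,
      IsGreatest ((fun x => (∑ i, y i * x i) + g x) '' simplexOrd θ) M ∧
      Tendsto (fun n : ℕ => (1 / (n : ℝ)) * Real.log
          (∑ lam ∈ partitionsTh θ n, Real.exp (∑ i, y i * (lam i : ℝ)) *
            ∑ μ ∈ (partitionsTh θ n).filter (fun μ => domN θ μ lam),
              Real.exp ((n : ℝ) * Φ n lam μ)))
        atTop (nhds M) := by
  have hθpos : 0 < θ := by omega
  show ∃ M : ℝ,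
      IsGreatest ((fun x => (∑ i, y i * x i) + g x) '' simplexOrd θ) M ∧
      Tendsto (fun n : ℕ => (1 / (n : ℝ)) * Real.log (Sfun θ Φ y n)) atTop (nhds M)
  -- the maximizer of F over the pair set
  have hFcont : ContinuousOn (fun p : (Fin θ → ℝ) × (Fin θ → ℝ) =>
      (∑ i, y i * p.1 i) + φ p.2) (pairSet θ) := by
    apply ContinuousOn.add
    · exact (continuous_finset_sum _ fun i _ =>
        (continuous_const.mul ((continuous_apply i).comp continuous_fst))).continuousOn
    · exact hφ.comp continuous_snd.continuousOn (fun p hp => hp.2.1)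
  obtain ⟨p₀, hp₀, hmax⟩ := (isCompact_pairSet θ).exists_isMaxOn
    (pairSet_nonempty θ hθpos) hFcont
  obtain ⟨hx₀, hz₀, hdom₀⟩ := hp₀
  set M : ℝ := (∑ i, y i * p₀.1 i) + φ p₀.2 with hM
  have hmax' : ∀ p ∈ pairSet θ, (∑ i, y i * p.1 i) + φ p.2 ≤ M := by
    intro p hp
    exact hmax hp
  have hgx₀ := hg p₀.1 hx₀
  have hgf : g p₀.1 = φ p₀.2 := by
    obtain ⟨z', hz', hz'eq⟩ := hgx₀.1
    have h1 : φ p₀.2 ≤ g p₀.1 := hgx₀.2 ⟨p₀.2, ⟨hz₀, hdom₀⟩, rfl⟩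
    have h2 : g p₀.1 ≤ φ p₀.2 := by
      have := hmax' (p₀.1, z') ⟨hx₀, hz'.1, hz'.2⟩
      simp only at this
      rw [← hz'eq]
      simp only [hM] at this
      linarith
    linarith
  have hMeq : M = (∑ i, y i * p₀.1 i) + g p₀.1 := by rw [hM, hgf]
  have hSpos := Sfun_pos θ hθpos Φ y
  refine ⟨M, ⟨⟨p₀.1, hx₀, hMeq.symm⟩, ?_⟩, ?_⟩
  · rintro b ⟨x, hx, rfl⟩
    obtain ⟨z, hz, hzeq⟩ := (hg x hx).1
    have := hmax' (x, z) ⟨hx, hz.1, hz.2⟩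
    simp only at this ⊢
    rw [← hzeq]
    linarith
  -- the limit
  have hupper : ∀ n : ℕ, 1 ≤ n → (1 / (n:ℝ)) * Real.log (Sfun θ Φ y n)
      ≤ (M + δ n) + 2 * (θ:ℝ) * (Real.log ((n:ℝ) + 1) / (n:ℝ)) := by
    intro n hn
    have hn0 : (0:ℝ) < n := by exact_mod_cast hn
    have hpair : ∀ lam ∈ partitionsTh θ n,
        ∀ mu ∈ (partitionsTh θ n).filter (fun μ => domN θ μ lam),
        (∑ i, y i * (lam i : ℝ)) + (n:ℝ) * Φ n lam mu ≤ (n:ℝ) * (M + δ n) := by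
      intro lam hlam mu hmu
      rw [Finset.mem_filter] at hmu
      obtain ⟨hmuP, hmudom⟩ := hmu
      have hp : ((fun i => (lam i : ℝ) / n), (fun i => (mu i : ℝ) / n)) ∈ pairSet θ :=
        ⟨part_mem_simplex θ n hn lam hlam, part_mem_simplex θ n hn mu hmuP,
          domN_domR θ n hn mu lam hmudom⟩
      have hFb := hmax' _ hp
      simp only at hFb
      have habs := abs_le.mp (happrox n hn lam hlam mu hmuP)
      have hsum' : (∑ i, y i * ((lam i : ℝ) / n)) + Φ n lam mu ≤ M + δ n := by
        linarith [hFb, habs.2]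
      have hylam : (∑ i, y i * (lam i : ℝ)) = (n:ℝ) * ∑ i, y i * ((lam i : ℝ) / n) := by
        rw [Finset.mul_sum]
        refine Finset.sum_congr rfl fun i _ => ?_
        field_simp
      rw [hylam]
      calc (n:ℝ) * (∑ i, y i * ((lam i:ℝ)/n)) + (n:ℝ) * Φ n lam mu
          = (n:ℝ) * ((∑ i, y i * ((lam i:ℝ)/n)) + Φ n lam mu) := by ring
        _ ≤ (n:ℝ) * (M + δ n) := mul_le_mul_of_nonneg_left hsum' hn0.le
    have hcardR : ((partitionsTh θ n).card : ℝ) ≤ ((n:ℝ) + 1) ^ θ := by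
      calc ((partitionsTh θ n).card : ℝ) ≤ (((n+1)^θ : ℕ) : ℝ) := by
            exact_mod_cast card_partitionsTh_le θ n
        _ = ((n:ℝ) + 1) ^ θ := by push_cast; ring
    have hinner : ∀ lam ∈ partitionsTh θ n,
        Real.exp (∑ i, y i * (lam i : ℝ)) *
          ∑ mu ∈ (partitionsTh θ n).filter (fun μ => domN θ μ lam),
            Real.exp ((n:ℝ) * Φ n lam mu)
        ≤ ((n:ℝ) + 1) ^ θ * Real.exp ((n:ℝ) * (M + δ n)) := by
      intro lam hlam
      rw [Finset.mul_sum]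
      have hterm : ∀ mu ∈ (partitionsTh θ n).filter (fun μ => domN θ μ lam),
          Real.exp (∑ i, y i * (lam i : ℝ)) * Real.exp ((n:ℝ) * Φ n lam mu)
            ≤ Real.exp ((n:ℝ) * (M + δ n)) := by
        intro mu hmu
        rw [← Real.exp_add]
        exact Real.exp_le_exp.2 (hpair lam hlam mu hmu)
      calc ∑ mu ∈ (partitionsTh θ n).filter (fun μ => domN θ μ lam),
            Real.exp (∑ i, y i * (lam i : ℝ)) * Real.exp ((n:ℝ) * Φ n lam mu)
          ≤ ((partitionsTh θ n).filter (fun μ => domN θ μ lam)).card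
              • Real.exp ((n:ℝ) * (M + δ n)) :=
            Finset.sum_le_card_nsmul _ _ _ hterm
        _ = (((partitionsTh θ n).filter (fun μ => domN θ μ lam)).card : ℝ)
              * Real.exp ((n:ℝ) * (M + δ n)) := nsmul_eq_mul _ _
        _ ≤ ((n:ℝ) + 1) ^ θ * Real.exp ((n:ℝ) * (M + δ n)) := by
            apply mul_le_mul_of_nonneg_right _ (Real.exp_pos _).le
            refine le_trans ?_ hcardR
            exact_mod_cast Finset.card_filter_le _ _
    have hSle : Sfun θ Φ y n ≤ ((n:ℝ) + 1) ^ θ * (((n:ℝ) + 1) ^ θ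
        * Real.exp ((n:ℝ) * (M + δ n))) := by
      calc Sfun θ Φ y n
          ≤ (partitionsTh θ n).card • (((n:ℝ) + 1) ^ θ * Real.exp ((n:ℝ) * (M + δ n))) :=
            Finset.sum_le_card_nsmul _ _ _ hinner
        _ = ((partitionsTh θ n).card : ℝ) * (((n:ℝ) + 1) ^ θ
              * Real.exp ((n:ℝ) * (M + δ n))) := nsmul_eq_mul _ _
        _ ≤ ((n:ℝ) + 1) ^ θ * (((n:ℝ) + 1) ^ θ * Real.exp ((n:ℝ) * (M + δ n))) := by
            apply mul_le_mul_of_nonneg_right hcardR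
            positivity
    have hlogle : Real.log (Sfun θ Φ y n) ≤ (θ:ℝ) * Real.log ((n:ℝ) + 1)
        + ((θ:ℝ) * Real.log ((n:ℝ) + 1) + (n:ℝ) * (M + δ n)) := by
      have h := Real.log_le_log (hSpos n) hSle
      rwa [Real.log_mul (by positivity) (by positivity),
        Real.log_mul (by positivity) (Real.exp_pos _).ne', Real.log_pow,
        Real.log_exp] at h
    have h2 := mul_le_mul_of_nonneg_left hlogle (by positivity : (0:ℝ) ≤ 1 / (n:ℝ))
    refine h2.trans_eq ?_
    field_simp
    ring
  have hT : Tendsto (fun n : ℕ => (M + δ n) + 2 * (θ:ℝ) * (Real.log ((n:ℝ) + 1) / (n:ℝ)))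
      atTop (𝓝 M) := by
    have h1 : Tendsto (fun n : ℕ => M + δ n) atTop (𝓝 (M + 0)) :=
      tendsto_const_nhds.add hδ
    have h2 : Tendsto (fun n : ℕ => 2 * (θ:ℝ) * (Real.log ((n:ℝ) + 1) / (n:ℝ))) atTop
        (𝓝 (2 * (θ:ℝ) * 0)) := tendsto_const_nhds.mul log_div_tendsto
    have := h1.add h2
    simpa using this
  refine tendsto_order.2 ⟨?_, ?_⟩
  · -- lower bound
    intro c hc
    set κ : ℝ := (M - c) / 6 with hκdef
    have hκpos : 0 < κ := by rw [hκdef]; linarith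
    set c' : ℝ := (M + c) / 2 with hc'def
    have hc'M : c' < M := by rw [hc'def]; linarith
    set u := uvec θ with hu
    have humem := uvec_mem θ hθpos
    set c₀ : ℝ := 2 / ((θ:ℝ) * ((θ:ℝ) + 1)) with hc₀def
    have hθR : (0:ℝ) < θ := by exact_mod_cast hθpos
    have hc₀pos : 0 < c₀ := by
      rw [hc₀def]
      apply div_pos two_pos (mul_pos hθR (by linarith))
    -- choice of the perturbation parameter t
    set xt : ℝ → (Fin θ → ℝ) := fun t => fun i => (1 - t) * p₀.1 i + t * u i with hxt
    set zt : ℝ → (Fin θ → ℝ) := fun t => fun i => (1 - t) * p₀.2 i + t * u i with hzt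
    have hxtcont : Continuous xt := by
      apply continuous_pi
      intro i
      fun_prop
    have hztcont : Continuous zt := by
      apply continuous_pi
      intro i
      fun_prop
    have hxt0 : xt 0 = p₀.1 := by funext i; simp [hxt]
    have hzt0 : zt 0 = p₀.2 := by funext i; simp [hzt]
    have hmem01 : ∀ᶠ t in 𝓝[>] (0:ℝ), t ∈ Set.Ioc (0:ℝ) 1 :=
      Ioc_mem_nhdsGT_of_mem ⟨le_refl 0, zero_lt_one⟩
    have hztS : Tendsto zt (𝓝[>] (0:ℝ)) (𝓝[simplexOrd θ] p₀.2) := by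
      rw [tendsto_nhdsWithin_iff]
      constructor
      · exact (hztcont.tendsto' 0 p₀.2 hzt0).mono_left nhdsWithin_le_nhds
      · filter_upwards [hmem01] with t ht
        exact combo_mem θ p₀.2 u hz₀ humem t ht.1.le ht.2
    have hφz : Tendsto (fun t => φ (zt t)) (𝓝[>] (0:ℝ)) (𝓝 (φ p₀.2)) :=
      ((hφ p₀.2 hz₀).tendsto).comp hztS
    have hyx : Tendsto (fun t => ∑ i, y i * xt t i) (𝓝[>] (0:ℝ))
        (𝓝 (∑ i, y i * p₀.1 i)) := by
      have hcont : Continuous (fun t => ∑ i, y i * xt t i) :=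
        continuous_finset_sum _ fun i _ =>
          continuous_const.mul ((continuous_apply i).comp hxtcont)
      have := hcont.tendsto' 0 (∑ i, y i * p₀.1 i) (by rw [hxt0])
      exact this.mono_left nhdsWithin_le_nhds
    have hG : Tendsto (fun t => (∑ i, y i * xt t i) + φ (zt t)) (𝓝[>] (0:ℝ)) (𝓝 M) :=
      hyx.add hφz
    have hev := (tendsto_order.1 hG).1 c' hc'M
    obtain ⟨t, ht01, hGt⟩ := (hmem01.and hev).exists
    obtain ⟨ht0, ht1⟩ := ht01
    set vX := xt t with hvX
    set vZ := zt t with hvZ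
    have hvXmem : vX ∈ simplexOrd θ := combo_mem θ p₀.1 u hx₀ humem t ht0.le ht1
    have hvZmem : vZ ∈ simplexOrd θ := combo_mem θ p₀.2 u hz₀ humem t ht0.le ht1
    have hgapX : ∀ k : ℕ, k + 1 < θ →
        ext0 θ vX (k + 1) + t * c₀ ≤ ext0 θ vX k :=
      combo_gap θ p₀.1 u hx₀.1 c₀ (uvec_gap θ) t ht0.le ht1
    have hgapZ : ∀ k : ℕ, k + 1 < θ →
        ext0 θ vZ (k + 1) + t * c₀ ≤ ext0 θ vZ k :=
      combo_gap θ p₀.2 u hz₀.1 c₀ (uvec_gap θ) t ht0.le ht1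
    have hcumle : ∀ j : Fin θ, cum θ vX (j.val + 1) ≤ cum θ vZ (j.val + 1) := by
      intro j
      have h1 : cum θ vX (j.val + 1)
          = (1 - t) * cum θ p₀.1 (j.val + 1) + t * cum θ u (j.val + 1) :=
        cum_combo θ p₀.1 u (1 - t) t (j.val + 1)
      have h2 : cum θ vZ (j.val + 1)
          = (1 - t) * cum θ p₀.2 (j.val + 1) + t * cum θ u (j.val + 1) :=
        cum_combo θ p₀.2 u (1 - t) t (j.val + 1)
      have h3 : cum θ p₀.1 (j.val + 1) ≤ cum θ p₀.2 (j.val + 1) := by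
        rw [← filt_sum_cum, ← filt_sum_cum]
        exact hdom₀ j
      rw [h1, h2]
      nlinarith
    obtain ⟨r, hrpos, hball⟩ := Metric.continuousWithinAt_iff.1 (hφ vZ hvZmem) κ hκpos
    set B : ℝ := ∑ i, |y i| with hB
    have hBnn : 0 ≤ B := Finset.sum_nonneg fun i _ => abs_nonneg _
    have htc₀ : 0 < t * c₀ := mul_pos ht0 hc₀pos
    have hev1 : ∀ᶠ n : ℕ in atTop, (4 / (t * c₀) : ℝ) ≤ n :=
      tendsto_natCast_atTop_atTop.eventually_ge_atTop _
    have hev2 : ∀ᶠ n : ℕ in atTop, (2 / r + 1 : ℝ) ≤ n :=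
      tendsto_natCast_atTop_atTop.eventually_ge_atTop _
    have hev3 : ∀ᶠ n : ℕ in atTop, ((2 * B + 1) / κ : ℝ) ≤ n :=
      tendsto_natCast_atTop_atTop.eventually_ge_atTop _
    have hev4 : ∀ᶠ n : ℕ in atTop, δ n < κ := (tendsto_order.1 hδ).2 κ hκpos
    filter_upwards [hev1, hev2, hev3, hev4, eventually_ge_atTop 1] with n h1 h2 h3 h4 h5
    have hn0 : (0:ℝ) < n := by exact_mod_cast h5
    have hnc : 4 ≤ (n:ℝ) * (t * c₀) := by
      rw [div_le_iff₀ htc₀] at h1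
      linarith
    obtain ⟨lam, hlamP, hlamPS, hlamC⟩ := construct θ vX hvXmem (t * c₀) hgapX
      Nat.floor Nat.floor_mono (fun a => (Nat.sub_one_lt_floor a).le)
      (fun a ha => by linarith [Nat.floor_le ha]) Nat.floor_zero
      (fun m => Nat.floor_natCast m) n hnc
    obtain ⟨mu, hmuP, hmuPS, hmuC⟩ := construct θ vZ hvZmem (t * c₀) hgapZ
      Nat.ceil Nat.ceil_mono (fun a => le_trans (by linarith) (Nat.le_ceil a))
      (fun a ha => (Nat.ceil_lt_add_one ha).le) Nat.ceil_zero
      (fun m => Nat.ceil_natCast m) n hnc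
    have hdomN : domN θ mu lam := by
      intro j
      rw [hlamPS j, hmuPS j]
      calc ⌊(n:ℝ) * cum θ vX (j.val + 1)⌋₊
          ≤ ⌊(n:ℝ) * cum θ vZ (j.val + 1)⌋₊ :=
            Nat.floor_mono (mul_le_mul_of_nonneg_left (hcumle j) hn0.le)
        _ ≤ ⌈(n:ℝ) * cum θ vZ (j.val + 1)⌉₊ := Nat.floor_le_ceil _
    -- the chosen term is a lower bound for the sum
    have hSlow : Real.exp (∑ i, y i * (lam i : ℝ)) * Real.exp ((n:ℝ) * Φ n lam mu)
        ≤ Sfun θ Φ y n := by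
      have hmufilt : mu ∈ (partitionsTh θ n).filter (fun μ => domN θ μ lam) :=
        Finset.mem_filter.2 ⟨hmuP, hdomN⟩
      have t1 : Real.exp ((n:ℝ) * Φ n lam mu)
          ≤ ∑ mu' ∈ (partitionsTh θ n).filter (fun μ => domN θ μ lam),
              Real.exp ((n:ℝ) * Φ n lam mu') :=
        Finset.single_le_sum (f := fun mu' => Real.exp ((n:ℝ) * Φ n lam mu'))
          (fun _ _ => (Real.exp_pos _).le) hmufilt
      have t2 := mul_le_mul_of_nonneg_left t1 (Real.exp_pos (∑ i, y i * (lam i : ℝ))).le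
      refine t2.trans ?_
      exact Finset.single_le_sum (f := fun lam' =>
          Real.exp (∑ i, y i * (lam' i : ℝ)) *
            ∑ mu' ∈ (partitionsTh θ n).filter (fun μ => domN θ μ lam'),
              Real.exp ((n:ℝ) * Φ n lam' mu'))
        (fun lam' _ => mul_nonneg (Real.exp_pos _).le
          (Finset.sum_nonneg fun _ _ => (Real.exp_pos _).le)) hlamP
    have hlogS : (∑ i, y i * (lam i : ℝ)) + (n:ℝ) * Φ n lam mu ≤ Real.log (Sfun θ Φ y n) := by
      have h := Real.log_le_log (by positivity) hSlow
      rwa [← Real.exp_add, Real.log_exp] at h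
    have step1 : (∑ i, y i * ((lam i : ℝ) / n)) + Φ n lam mu
        ≤ (1 / (n:ℝ)) * Real.log (Sfun θ Φ y n) := by
      have h := mul_le_mul_of_nonneg_left hlogS (by positivity : (0:ℝ) ≤ 1 / (n:ℝ))
      refine le_trans (le_of_eq ?_) h
      rw [mul_add, Finset.mul_sum]
      have hn0' : (n:ℝ) ≠ 0 := hn0.ne'
      congr 1
      · exact Finset.sum_congr rfl fun i _ => by ring
      · field_simp
    -- estimate the y-part
    have hyclose : |(∑ i, y i * ((lam i : ℝ) / n)) - ∑ i, y i * vX i| ≤ 2 * B / n := by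
      rw [← Finset.sum_sub_distrib]
      calc |∑ i, (y i * ((lam i : ℝ) / n) - y i * vX i)|
          ≤ ∑ i, |y i * ((lam i : ℝ) / n) - y i * vX i| :=
            Finset.abs_sum_le_sum_abs _ _
        _ ≤ ∑ i, |y i| * (2 / n) := by
            refine Finset.sum_le_sum fun i _ => ?_
            rw [← mul_sub, abs_mul]
            exact mul_le_mul_of_nonneg_left (coord_close n hn0 _ _ (hlamC i)) (abs_nonneg _)
        _ = 2 * B / n := by rw [← Finset.sum_mul, hB]; ring
    have hyb : (∑ i, y i * vX i) - κ ≤ ∑ i, y i * ((lam i : ℝ) / n) := by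
      have hk : 2 * B / n < κ := by
        rw [div_lt_iff₀ hn0]
        have : (2 * B + 1) ≤ κ * n := by
          rw [div_le_iff₀ hκpos] at h3
          linarith
        linarith
      have := abs_le.mp hyclose
      linarith [this.1]
    -- estimate the φ-part
    have hmusimplex : (fun i => (mu i : ℝ) / n) ∈ simplexOrd θ :=
      part_mem_simplex θ n h5 mu hmuP
    have hmudist : dist (fun i => (mu i : ℝ) / n) vZ < r := by
      rw [dist_pi_lt_iff hrpos]
      intro i
      rw [Real.dist_eq]
      have := coord_close n hn0 (mu i : ℝ) (vZ i) (hmuC i)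
      have h2n : 2 / (n:ℝ) < r := by
        rw [div_lt_iff₀ hn0]
        have h2' : 2 / r < (n:ℝ) := by linarith
        rw [div_lt_iff₀ hrpos] at h2'
        linarith
      linarith
    have hφb : φ vZ - κ < φ (fun i => (mu i : ℝ) / n) := by
      have := hball hmusimplex hmudist
      rw [Real.dist_eq] at this
      have := abs_lt.mp this
      linarith [this.1]
    have happ := abs_le.mp (happrox n h5 lam hlamP mu hmuP)
    -- conclusion
    have hbig : c < (∑ i, y i * ((lam i : ℝ) / n)) + Φ n lam mu := by
      have e1 : Φ n lam mu ≥ φ (fun i => (mu i : ℝ) / n) - δ n := by linarith [happ.1]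
      have hceq : c' - 3 * κ = c := by rw [hc'def, hκdef]; ring
      linarith [hGt, hyb, hφb, e1, h4, hceq]
    exact lt_of_lt_of_le hbig step1
  · intro c hc
    have h3 := (tendsto_order.1 hT).2 c hc
    filter_upwards [h3, eventually_ge_atTop 1] with n h4 h5
    exact lt_of_le_of_lt (hupper n h5) h4
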